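/- Let S be a w_st-Serre subcategory of F𝒞, i.e. a full subcategory, closed under isomorphisms, such that (i) for every short exact sequence in F𝒞, whenever two of the three terms lie in S so does the third, and (ii) if an object of F𝒞 is connected to an object of S by a finite zig-zag of stable weak equivalences then it lies in S. If S contains the constant filtered object j(c) for every object c of 𝒞, then S contains every weakly bounded filtered object. -/
import Mathlib


open CategoryTheory CategoryTheory.Limits ZeroObject

universe v u

/-- An *admissible class* of morphisms in an abelian category: it contains all
isomorphisms, satisfies the two-out-of-three property, and in any morphism of
short exact sequences, if two of the three vertical morphisms lie in the class
then so does the third. -/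
structure AdmissibleClass {C : Type u} [Category.{v} C] [Abelian C]
    (w : MorphismProperty C) : Prop where
  of_isIso : ∀ {x y : C} (f : x ⟶ y), IsIso f → w f
  comp_mem : ∀ {x y z : C} (f : x ⟶ y) (g : y ⟶ z), w f → w g → w (f ≫ g)
  of_comp_left : ∀ {x y z : C} (f : x ⟶ y) (g : y ⟶ z), w g → w (f ≫ g) → w f
  of_comp_right : ∀ {x y z : C} (f : x ⟶ y) (g : y ⟶ z), w f → w (f ≫ g) → w g
  ses_fst : ∀ {S₁ S₂ : ShortComplex C}, S₁.ShortExact → S₂.ShortExact →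
    ∀ (φ : S₁ ⟶ S₂), w φ.τ₂ → w φ.τ₃ → w φ.τ₁
  ses_snd : ∀ {S₁ S₂ : ShortComplex C}, S₁.ShortExact → S₂.ShortExact →
    ∀ (φ : S₁ ⟶ S₂), w φ.τ₁ → w φ.τ₃ → w φ.τ₂
  ses_trd : ∀ {S₁ S₂ : ShortComplex C}, S₁.ShortExact → S₂.ShortExact →
    ∀ (φ : S₁ ⟶ S₂), w φ.τ₁ → w φ.τ₂ → w φ.τ₃

variable {C : Type u} [Category.{v} C] [Abelian C]

/-- The class `lw` of level weak equivalences in the category `F𝒞 = ℕ ⥤ 𝒞` of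
filtered objects: morphisms all of whose components lie in `w`. -/
def LevelWeq (w : MorphismProperty C) : MorphismProperty (ℕ ⥤ C) :=
  fun _ _ f => ∀ n : ℕ, w (f.app n)

/-- The class `w_st` of stable weak equivalences in `F𝒞 = ℕ ⥤ 𝒞`: morphisms
whose components eventually lie in `w`. -/
def StableWeq (w : MorphismProperty C) : MorphismProperty (ℕ ⥤ C) :=
  fun _ _ f => ∃ N : ℕ, ∀ n : ℕ, N ≤ n → w (f.app n)

/-- A filtered object is *weakly bounded* if its transition maps eventually
lie in `w`. -/
def WeaklyBounded (w : MorphismProperty C) (x : ℕ ⥤ C) : Prop :=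
  ∃ N : ℕ, ∀ n : ℕ, N ≤ n → w (x.map (homOfLE (Nat.le_succ n)))

/-- A filtered object is *bounded* if its transition maps are eventually
isomorphisms. -/
def BoundedFiltered (x : ℕ ⥤ C) : Prop :=
  ∃ b : ℕ, ∀ n : ℕ, b ≤ n → IsIso (x.map (homOfLE (Nat.le_succ n)))

/-- A *`v`-Serre subcategory* of an abelian category, encoded as the set of its
objects: closed under isomorphisms, satisfying two-out-of-three in short exact
sequences, and `v`-closed (closed under sources and targets of morphisms of
`v`, hence under finite zig-zags of morphisms of `v`). -/
structure IsWSerre {D : Type*} [Category D] [Abelian D]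
    (v : MorphismProperty D) (S : Set D) : Prop where
  iso_closed : ∀ {x y : D}, (x ≅ y) → x ∈ S → y ∈ S
  ses_fst : ∀ {T : ShortComplex D}, T.ShortExact → T.X₂ ∈ S → T.X₃ ∈ S → T.X₁ ∈ S
  ses_snd : ∀ {T : ShortComplex D}, T.ShortExact → T.X₁ ∈ S → T.X₃ ∈ S → T.X₂ ∈ S
  ses_trd : ∀ {T : ShortComplex D}, T.ShortExact → T.X₁ ∈ S → T.X₂ ∈ S → T.X₃ ∈ S
  w_src : ∀ {x y : D} (f : x ⟶ y), v f → y ∈ S → x ∈ S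
  w_tgt : ∀ {x y : D} (f : x ⟶ y), v f → x ∈ S → y ∈ S

theorem weaklyBounded_mem_of_wstSerre {w : MorphismProperty C}
    (hw : AdmissibleClass w)
    {S : Set (ℕ ⥤ C)} (hS : IsWSerre (StableWeq w) S)
    (hconst : ∀ c : C, (Functor.const ℕ).obj c ∈ S) :
    ∀ x : ℕ ⥤ C, WeaklyBounded w x → x ∈ S := by

  rintro x ⟨N, hN⟩
  -- homs between equal objects of ℕ are isos
  have natIso : ∀ {a b : ℕ} (h : a ≤ b), b ≤ a → IsIso (homOfLE h) := by
    intro a b h h'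
    exact ⟨homOfLE h', Subsingleton.elim _ _, Subsingleton.elim _ _⟩
  -- long transition maps are in w
  have key : ∀ n (h : N ≤ n), w (x.map (homOfLE h)) := by
    intro n h
    induction n, h using Nat.le_induction with
    | base =>
      rw [Subsingleton.elim (homOfLE (le_refl N)) (𝟙 N), x.map_id]
      exact hw.of_isIso _ inferInstance
    | succ n hn ih =>
      rw [Subsingleton.elim (homOfLE _) (homOfLE hn ≫ homOfLE (Nat.le_succ n)), x.map_comp]
      exact hw.comp_mem _ _ ih (hN n hn)
  let M : ℕ ⥤ ℕ := Monotone.functor (f := fun n => max n N) (fun a b h => max_le_max h le_rfl)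
  have hM : ∀ n, M.obj n = max n N := fun _ => rfl
  let η : x ⟶ M ⋙ x :=
    { app := fun n => x.map (homOfLE (le_max_left n N))
      naturality := fun a b f => by
        dsimp [M, Monotone.functor]
        rw [← x.map_comp, ← x.map_comp]
        congr 1 }
  let φ : (Functor.const ℕ).obj (x.obj N) ⟶ M ⋙ x :=
    { app := fun n => x.map (homOfLE (le_max_right n N))
      naturality := fun a b f => by
        dsimp [M, Monotone.functor]
        rw [Category.id_comp, ← x.map_comp]
        congr 1 }
  have hφ : StableWeq w φ := by
    refine ⟨N, fun n hn => ?_⟩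
    show w (x.map (homOfLE (le_max_right n N)))
    rw [Subsingleton.elim (homOfLE (le_max_right n N))
      (homOfLE hn ≫ homOfLE (le_max_left n N)), x.map_comp]
    refine hw.comp_mem _ _ (key n hn) ?_
    haveI := natIso (le_max_left n N) (max_le le_rfl hn)
    exact hw.of_isIso _ inferInstance
  have hη : StableWeq w η := by
    refine ⟨N, fun n hn => ?_⟩
    show w (x.map (homOfLE (le_max_left n N)))
    haveI := natIso (le_max_left n N) (max_le le_rfl hn)
    exact hw.of_isIso _ inferInstance
  exact hS.w_src η hη (hS.w_tgt φ hφ (hconst _))
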